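/- Let ε = exp(2πi/7) and define the 3×3 complex matrices E₁ = (1/7)·[[1,1,1],[1,1,1],[1,1,1]], E₂ = (1/7)·[[1,ε⁶,ε²],[ε,1,ε³],[ε⁵,ε⁴,1]], E₃ = (1/7)·[[1,ε²,ε³],[ε⁵,1,ε],[ε⁴,ε⁶,1]], E₄ = (1/7)·[[1,ε⁴,ε⁶],[ε³,1,ε²],[ε,ε⁵,1]], and E₅, E₆, E₇ the entrywise complex conjugates of E₂, E₃, E₄ respectively. Then for each i ∈ {1,…,7} the matrix P_i = (7/3)·E_i is an orthogonal projection of rank one, i.e. P_i = P_i* = P_i² and Tr P_i = 1; in particular each E_i is positive semidefinite. -/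

import Mathlib

open Matrix

/-- `ε = exp(2πi/7)`. -/
noncomputable def eps : ℂ := Complex.exp (2 * Real.pi * Complex.I / 7)

/-- The seven matrices of the qutrit example of Section 6. -/
noncomputable def qutritPOVM : Fin 7 → Matrix (Fin 3) (Fin 3) ℂ :=
  ![(1 / 7 : ℂ) • !![1, 1, 1; 1, 1, 1; 1, 1, 1],
    (1 / 7 : ℂ) • !![1, eps ^ 6, eps ^ 2; eps, 1, eps ^ 3; eps ^ 5, eps ^ 4, 1],
    (1 / 7 : ℂ) • !![1, eps ^ 2, eps ^ 3; eps ^ 5, 1, eps; eps ^ 4, eps ^ 6, 1],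
    (1 / 7 : ℂ) • !![1, eps ^ 4, eps ^ 6; eps ^ 3, 1, eps ^ 2; eps, eps ^ 5, 1],
    ((1 / 7 : ℂ) • !![1, eps ^ 6, eps ^ 2; eps, 1, eps ^ 3; eps ^ 5, eps ^ 4, 1]).map (starRingEnd ℂ),
    ((1 / 7 : ℂ) • !![1, eps ^ 2, eps ^ 3; eps ^ 5, 1, eps; eps ^ 4, eps ^ 6, 1]).map (starRingEnd ℂ),
    ((1 / 7 : ℂ) • !![1, eps ^ 4, eps ^ 6; eps ^ 3, 1, eps ^ 2; eps, eps ^ 5, 1]).map (starRingEnd ℂ)]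

/-!
Each `E_i` equals `(1/7) v v*` with `v = (1, ζ, ζ⁵)` and `ζ = ε^k` a seventh root of unity
(`k = 0, 1, 5, 3, 6, 2, 4` for `i = 1, …, 7`). As `|ζ| = 1`, `v* v = 3`, so
`(7/3) E_i = v v* / (v* v)` is the orthogonal projection onto `ℂ v`.
-/

section RankOneProjection

variable {K n : Type*} [Field K] [StarRing K] [Fintype n]

def rankOneProj (v : n → K) : Matrix n n K := (star v ⬝ᵥ v)⁻¹ • vecMulVec v (star v)

theorem conjTranspose_rankOneProj (v : n → K) : (rankOneProj v)ᴴ = rankOneProj v := by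
  rw [rankOneProj, conjTranspose_smul, conjTranspose_vecMulVec, star_star, star_inv₀,
    ← star_dotProduct]

theorem rankOneProj_mul_self {v : n → K} (hv : star v ⬝ᵥ v ≠ 0) :
    rankOneProj v * rankOneProj v = rankOneProj v := by
  rw [rankOneProj, smul_mul_smul_comm, vecMulVec_mul_vecMulVec, vecMulVec_smul, smul_smul,
    mul_assoc, inv_mul_cancel₀ hv, mul_one]

theorem trace_rankOneProj {v : n → K} (hv : star v ⬝ᵥ v ≠ 0) : (rankOneProj v).trace = 1 := by
  rw [rankOneProj, trace_smul, trace_vecMulVec, dotProduct_comm v, smul_eq_mul, inv_mul_cancel₀ hv]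

end RankOneProjection

theorem isPrimitiveRoot_eps : IsPrimitiveRoot eps 7 := by
  simpa [eps] using Complex.isPrimitiveRoot_exp 7 (by norm_num)

theorem eps_pow_seven : eps ^ 7 = 1 := isPrimitiveRoot_eps.pow_eq_one

theorem norm_eps : ‖eps‖ = 1 := isPrimitiveRoot_eps.norm'_eq_one (by norm_num)

theorem conj_eps : starRingEnd ℂ eps = eps ^ 6 := by
  rw [← Complex.inv_eq_conj norm_eps, inv_eq_of_mul_eq_one_right]
  rw [← pow_succ', eps_pow_seven]

theorem eps_pow_of_seven_le {m : ℕ} (h : 7 ≤ m) : eps ^ m = eps ^ (m - 7) := by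
  rw [← Nat.sub_add_cancel h, pow_add, eps_pow_seven, mul_one, Nat.add_sub_cancel]

noncomputable def qutritVec (k : ℕ) : Fin 3 → ℂ := ![1, eps ^ k, eps ^ (5 * k)]

theorem star_qutritVec_dotProduct_self (k : ℕ) : star (qutritVec k) ⬝ᵥ qutritVec k = 3 := by
  norm_num [qutritVec, dotProduct, Fin.sum_univ_three, Complex.conj_mul', norm_eps, cons_val_two]

theorem exists_qutritPOVM_eq (i : Fin 7) :
    ∃ k, qutritPOVM i = (1 / 7 : ℂ) • vecMulVec (qutritVec k) (star (qutritVec k)) := by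
  refine ⟨![0, 1, 5, 3, 6, 2, 4] i, ?_⟩
  ext a b
  fin_cases i <;> fin_cases a <;> fin_cases b <;>
    simp only [qutritPOVM, qutritVec, vecMulVec_apply, Pi.star_apply, Matrix.smul_apply] <;>
    simp [conj_eps, map_ofNat, ← pow_mul, ← pow_add, ← pow_succ, ← pow_succ', eps_pow_of_seven_le]

open ComplexOrder in
theorem qutritPOVM_proj (i : Fin 7) :
    ((7 / 3 : ℂ) • qutritPOVM i)ᴴ = (7 / 3 : ℂ) • qutritPOVM i ∧
    ((7 / 3 : ℂ) • qutritPOVM i) * ((7 / 3 : ℂ) • qutritPOVM i) =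
      (7 / 3 : ℂ) • qutritPOVM i ∧
    ((7 / 3 : ℂ) • qutritPOVM i).trace = 1 ∧
    (qutritPOVM i).PosSemidef := by
  obtain ⟨k, hE⟩ := exists_qutritPOVM_eq i
  have hv : star (qutritVec k) ⬝ᵥ qutritVec k ≠ 0 := by
    rw [star_qutritVec_dotProduct_self]; norm_num
  have hP : (7 / 3 : ℂ) • qutritPOVM i = rankOneProj (qutritVec k) := by
    rw [hE, smul_smul, rankOneProj, star_qutritVec_dotProduct_self]
    norm_num
  rw [hP, hE]
  exact ⟨conjTranspose_rankOneProj _, rankOneProj_mul_self hv, trace_rankOneProj hv,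
    (posSemidef_vecMulVec_self_star _).smul (by positivity)⟩
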